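/- arXiv:1111.6796 — 2 statements merged into one kernel-verified Lean document; each statement's English description precedes it below -/
import Mathlib

section
/- Let r > 0 be real, t ∈ ℝ, τ = (τ₁, τ₂) ∈ ℂ², and let U be a 2×2 complex matrix with U*U = I₂. Then all sixteen entries of the 4×4 matrix P = N_(τ,t) · A_r · M_U lie in Z[ω] if and only if: r = 1, all entries of U lie in Z[ω], τ₁ ∈ Z[ω] and τ₂ ∈ Z[ω], and there exists k ∈ ℤ with t = √3·k such that k and |τ₁|² + |τ₂|² are integers of the same parity (k ≡ |τ₁|² + |τ₂|² (mod 2)). -/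
open Matrix Complex

/-- ω = (−1 + i√3)/2, a primitive cube root of unity. -/
noncomputable def ω : ℂ := (-1 + Complex.I * Real.sqrt 3) / 2

/-- The Eisenstein integers Z[ω], as a subset of ℂ. -/
def Zω : Set ℂ := {z : ℂ | ∃ a b : ℤ, z = (a : ℂ) + (b : ℂ) * ω}

/-- The Hermitian form matrix J. -/
def Jm : Matrix (Fin 4) (Fin 4) ℂ := !![0,0,0,1; 0,1,0,0; 0,0,1,0; 1,0,0,0]

/-- Heisenberg translation N_(τ,t). -/
noncomputable def N (τ₁ τ₂ : ℂ) (t : ℝ) : Matrix (Fin 4) (Fin 4) ℂ :=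
  !![1, -(starRingEnd ℂ) τ₁, -(starRingEnd ℂ) τ₂,
       (-((Complex.normSq τ₁ : ℂ) + (Complex.normSq τ₂ : ℂ)) + Complex.I * (t : ℝ)) / 2;
     0, 1, 0, τ₁;
     0, 0, 1, τ₂;
     0, 0, 0, 1]

/-- Heisenberg rotation M_U = diag(1, U, 1). -/
def M (U : Matrix (Fin 2) (Fin 2) ℂ) : Matrix (Fin 4) (Fin 4) ℂ :=
  !![1, 0, 0, 0;
     0, U 0 0, U 0 1, 0;
     0, U 1 0, U 1 1, 0;
     0, 0, 0, 1]

/-- Heisenberg dilation A_r = diag(r, 1, 1, 1/r). -/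
noncomputable def Ad (r : ℝ) : Matrix (Fin 4) (Fin 4) ℂ :=
  !![(r : ℂ), 0, 0, 0; 0, 1, 0, 0; 0, 0, 1, 0; 0, 0, 0, (r : ℂ)⁻¹]

noncomputable def U₁ : Matrix (Fin 2) (Fin 2) ℂ := !![0, 1; 1, 0]
noncomputable def U₂ : Matrix (Fin 2) (Fin 2) ℂ := !![-ω, 0; 0, 1]

/-- The Heisenberg translation N₁ = N_((1,0)ᵀ, √3). -/
noncomputable def N₁ : Matrix (Fin 4) (Fin 4) ℂ := N 1 0 (Real.sqrt 3)

/-- The involution R. -/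
def Rmat : Matrix (Fin 4) (Fin 4) ℂ := !![0,0,0,1; 0,-1,0,0; 0,0,-1,0; 1,0,0,0]

/-- The generators {N₁, M_{U₁}, M_{U₂}} of the stabilizer of ∞, as a subset of GL(4,ℂ). -/
noncomputable def gens3 : Set (GL (Fin 4) ℂ) :=
  {g | (g : Matrix (Fin 4) (Fin 4) ℂ) = N₁ ∨ (g : Matrix (Fin 4) (Fin 4) ℂ) = M U₁ ∨
       (g : Matrix (Fin 4) (Fin 4) ℂ) = M U₂}

/-- The generators {U₁, U₂}, as a subset of GL(2,ℂ). -/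
noncomputable def gens2 : Set (GL (Fin 2) ℂ) :=
  {g | (g : Matrix (Fin 2) (Fin 2) ℂ) = U₁ ∨ (g : Matrix (Fin 2) (Fin 2) ℂ) = U₂}

/-- The generators {N₁, M_{U₁}, M_{U₂}, R}, as a subset of GL(4,ℂ). -/
noncomputable def gens4 : Set (GL (Fin 4) ℂ) :=
  {g | (g : Matrix (Fin 4) (Fin 4) ℂ) = N₁ ∨ (g : Matrix (Fin 4) (Fin 4) ℂ) = M U₁ ∨
       (g : Matrix (Fin 4) (Fin 4) ℂ) = M U₂ ∨ (g : Matrix (Fin 4) (Fin 4) ℂ) = Rmat}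

/-! Every element of `ℤ[ω]` has the form `(m + k√-3) / 2` with `m ≡ k (mod 2)`, so the real
elements of `ℤ[ω]` are exactly the integers. The diagonal entries `r` and `r⁻¹` of
`P = N_(τ,t) A_r M_U` are therefore integers, which forces `r = 1`. Once `r = 1`, the other
entries of `P` are the entries of `U`, `τ₁`, `τ₂`, expressions in them that `ℤ[ω]` (a ring
stable under conjugation) contains automatically, and the corner `(-(|τ₁|² + |τ₂|²) + i t) / 2`,
whose membership in `ℤ[ω]` is the parity condition on `(t / √3, |τ₁|² + |τ₂|²)`. -/

lemma ω_re : ω.re = -(1 / 2) := by simp [ω]; norm_num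

lemma ω_im : ω.im = √3 / 2 := by simp [ω]

lemma ω_sq : ω ^ 2 = -1 - ω := by
  have h3 : ((√3 : ℝ) : ℂ) ^ 2 = 3 := by
    rw [← ofReal_pow, Real.sq_sqrt (by norm_num)]; norm_num
  unfold ω
  linear_combination (I ^ 2 / 4) * h3 + (3 / 4) * I_sq

lemma conj_ω : starRingEnd ℂ ω = -1 - ω := by
  apply Complex.ext <;> simp [ω_re, ω_im]
  norm_num

def eisensteinIntegers : Subring ℂ where
  carrier := Zω
  zero_mem' := ⟨0, 0, by simp⟩
  one_mem' := ⟨1, 0, by simp⟩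
  add_mem' := by
    rintro _ _ ⟨a, b, rfl⟩ ⟨c, d, rfl⟩
    exact ⟨a + c, b + d, by push_cast; ring⟩
  neg_mem' := by
    rintro _ ⟨a, b, rfl⟩
    exact ⟨-a, -b, by push_cast; ring⟩
  mul_mem' := by
    rintro _ _ ⟨a, b, rfl⟩ ⟨c, d, rfl⟩
    refine ⟨a * c - b * d, a * d + b * c - b * d, ?_⟩
    push_cast
    linear_combination ((b : ℂ) * d) * ω_sq

lemma conj_mem_eisensteinIntegers {z : ℂ} (hz : z ∈ eisensteinIntegers) :
    starRingEnd ℂ z ∈ eisensteinIntegers := by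
  obtain ⟨a, b, rfl⟩ := hz
  exact ⟨a - b, -b, by simp [conj_ω]; ring⟩

lemma mem_Zω_iff {z : ℂ} :
    z ∈ Zω ↔ ∃ m k : ℤ, 2 * z.re = m ∧ 2 * z.im = √3 * k ∧ k % 2 = m % 2 := by
  constructor
  · rintro ⟨a, b, rfl⟩
    refine ⟨2 * a - b, b, ?_, ?_, by omega⟩ <;> simp [ω_re, ω_im] <;> ring
  · rintro ⟨m, k, hre, him, hpar⟩
    obtain ⟨e, he⟩ : ∃ e, m + k = 2 * e := ⟨(m + k) / 2, by omega⟩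
    have he' : (m : ℝ) + k = 2 * e := by exact_mod_cast he
    refine ⟨e, k, Complex.ext ?_ ?_⟩ <;> simp [ω_re, ω_im] <;> linarith

lemma exists_int_eq_of_ofReal_mem_Zω {x : ℝ} (hx : (x : ℂ) ∈ Zω) : ∃ a : ℤ, x = a := by
  obtain ⟨m, k, hre, him, hpar⟩ := mem_Zω_iff.1 hx
  have hk : k = 0 := by
    have : √3 * k = 0 := by simpa using him.symm
    exact_mod_cast (mul_eq_zero.1 this).resolve_left (by positivity)
  obtain ⟨a, rfl⟩ : ∃ a, m = 2 * a := ⟨m / 2, by omega⟩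
  exact ⟨a, by push_cast at hre; simp at hre; linarith⟩

lemma eq_one_of_ofReal_mem_Zω {r : ℝ} (hr : 0 < r) (h : (r : ℂ) ∈ Zω) (h' : (r : ℂ)⁻¹ ∈ Zω) :
    r = 1 := by
  obtain ⟨a, rfl⟩ := exists_int_eq_of_ofReal_mem_Zω h
  obtain ⟨b, hb⟩ := exists_int_eq_of_ofReal_mem_Zω (x := (a : ℝ)⁻¹) (by simpa using h')
  have hab : a * b = 1 := by
    have : (a : ℝ) * b = 1 := by rw [← hb]; field_simp
    exact_mod_cast this
  have ha : 0 ≤ a := by exact_mod_cast hr.le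
  simp [Int.eq_one_of_mul_eq_one_right ha hab]

lemma half_mem_Zω_iff (s t : ℝ) :
    (-(s : ℂ) + I * t) / 2 ∈ Zω ↔ ∃ k m : ℤ, t = √3 * k ∧ s = m ∧ k % 2 = m % 2 := by
  have hre : ((-(s : ℂ) + I * t) / 2).re = -s / 2 := by simp
  have him : ((-(s : ℂ) + I * t) / 2).im = t / 2 := by simp
  rw [mem_Zω_iff, hre, him]
  constructor
  · rintro ⟨m, k, hm, hk, hpar⟩
    exact ⟨k, -m, by linarith, by push_cast; linarith, by omega⟩
  · rintro ⟨k, m, rfl, rfl, hpar⟩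
    exact ⟨-m, k, by push_cast; ring, by ring, by omega⟩

lemma N_mul_Ad_mul_M (τ₁ τ₂ : ℂ) (t r : ℝ) (U : Matrix (Fin 2) (Fin 2) ℂ) :
    N τ₁ τ₂ t * Ad r * M U =
    !![(r : ℂ),
       -(starRingEnd ℂ τ₁ * U 0 0) - starRingEnd ℂ τ₂ * U 1 0,
       -(starRingEnd ℂ τ₁ * U 0 1) - starRingEnd ℂ τ₂ * U 1 1,
       (-(normSq τ₁ + normSq τ₂ : ℝ) + I * t) / 2 * (r : ℂ)⁻¹;
       0, U 0 0, U 0 1, τ₁ * (r : ℂ)⁻¹;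
       0, U 1 0, U 1 1, τ₂ * (r : ℂ)⁻¹;
       0, 0, 0, (r : ℂ)⁻¹] := by
  ext i j
  fin_cases i <;> fin_cases j <;> simp [N, Ad, M, Matrix.mul_apply, Fin.sum_univ_four] <;> ring

theorem stmt5_general (r : ℝ) (hr : 0 < r) (t : ℝ) (τ₁ τ₂ : ℂ) (U : Matrix (Fin 2) (Fin 2) ℂ) :
    (∀ i j, (N τ₁ τ₂ t * Ad r * M U) i j ∈ Zω) ↔
      (r = 1 ∧ (∀ i j, U i j ∈ Zω) ∧ τ₁ ∈ Zω ∧ τ₂ ∈ Zω ∧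
        ∃ k m : ℤ, t = Real.sqrt 3 * (k : ℝ) ∧
          Complex.normSq τ₁ + Complex.normSq τ₂ = (m : ℝ) ∧ k % 2 = m % 2) := by
  rw [N_mul_Ad_mul_M, ← half_mem_Zω_iff]
  constructor
  · intro h
    obtain rfl : r = 1 := eq_one_of_ofReal_mem_Zω hr (by simpa using h 0 0) (by simpa using h 3 3)
    refine ⟨rfl, fun i j => ?_, by simpa using h 1 3, by simpa using h 2 3, by simpa using h 0 3⟩
    fin_cases i <;> fin_cases j
    exacts [by simpa using h 1 1, by simpa using h 1 2, by simpa using h 2 1, by simpa using h 2 2]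
  · rintro ⟨rfl, hU, hτ₁, hτ₂, hcorner⟩
    intro i j
    fin_cases i <;> fin_cases j <;> simp only [ofReal_one, inv_one, mul_one]
    all_goals first
      | exact eisensteinIntegers.zero_mem
      | exact eisensteinIntegers.one_mem
      | exact hU _ _
      | assumption
      | exact eisensteinIntegers.sub_mem
          (eisensteinIntegers.neg_mem (eisensteinIntegers.mul_mem
            (conj_mem_eisensteinIntegers hτ₁) (hU _ _)))
          (eisensteinIntegers.mul_mem (conj_mem_eisensteinIntegers hτ₂) (hU _ _))

/-- Characterization of the elements of the stabilizer of ∞ with Eisenstein integer entries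
in terms of the parameters of their Langlands decomposition. -/
theorem stmt5 (r : ℝ) (hr : 0 < r) (t : ℝ) (τ₁ τ₂ : ℂ) (U : Matrix (Fin 2) (Fin 2) ℂ)
    (hU : Uᴴ * U = 1) :
    (∀ i j, (N τ₁ τ₂ t * Ad r * M U) i j ∈ Zω) ↔
      (r = 1 ∧ (∀ i j, U i j ∈ Zω) ∧ τ₁ ∈ Zω ∧ τ₂ ∈ Zω ∧
        ∃ k m : ℤ, t = Real.sqrt 3 * (k : ℝ) ∧
          Complex.normSq τ₁ + Complex.normSq τ₂ = (m : ℝ) ∧ k % 2 = m % 2) :=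
  stmt5_general r hr t τ₁ τ₂ U
end

section
/- Let G ∈ U(3,1) be a 4×4 matrix all of whose entries lie in Z[ω], with G₄₁ = 0. Then G₁₁ is a sixth root of unity, i.e. G₁₁⁶ = 1. -/
open Matrix Complex

/-!
With `G 3 0 = 0`, the `(0,0)` entry of `Gᴴ J G = J` reads `|G₁₀|² + |G₂₀|² = 0`,
so the first column of `G` is `(G₀₀, 0, 0, 0)` and the `(0,3)` entry becomes `conj G₀₀ · G₃₃ = 1`.
Thus `G₀₀` is a unit of `ℤ[ω]`: its norm `a² - ab + b²` is a positive integer dividing `1`,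
and the six solutions of `a² - ab + b² = 1` are exactly the sixth roots of unity `±1, ±ω, ±ω²`.
-/

lemma ω_sq_add_ω_add_one : ω ^ 2 + ω + 1 = 0 := by
  have h3 : (Real.sqrt 3 : ℂ) ^ 2 = 3 := by norm_cast; rw [Real.sq_sqrt]; norm_num
  unfold ω
  linear_combination ((Real.sqrt 3 : ℂ) ^ 2 / 4) * Complex.I_sq - (1 / 4) * h3

lemma normSq_intCast_add_intCast_mul_ω (a b : ℤ) :
    Complex.normSq ((a : ℂ) + b * ω) = ((a ^ 2 - a * b + b ^ 2 : ℤ) : ℝ) := by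
  have h3 : Real.sqrt 3 ^ 2 = 3 := Real.sq_sqrt (by norm_num)
  simp only [ω, normSq_apply, add_re, intCast_re, mul_re, div_ofNat_re, neg_re, one_re, I_re,
    ofReal_re, zero_mul, I_im, ofReal_im, mul_zero, sub_self, add_zero, intCast_im, div_ofNat_im,
    add_im, neg_im, one_im, neg_zero, mul_im, one_mul, zero_add, sub_zero, Int.cast_add,
    Int.cast_sub, Int.cast_pow, Int.cast_mul]
  ring_nf
  nlinarith [h3]

lemma intCast_add_intCast_mul_ω_pow_six {a b : ℤ} (h : a ^ 2 - a * b + b ^ 2 = 1) :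
    ((a : ℂ) + b * ω) ^ 6 = 1 := by
  obtain ⟨ha₁, ha₂⟩ : -1 ≤ a ∧ a ≤ 1 :=
    ⟨by nlinarith [sq_nonneg (2 * b - a)], by nlinarith [sq_nonneg (2 * b - a)]⟩
  obtain ⟨hb₁, hb₂⟩ : -1 ≤ b ∧ b ≤ 1 :=
    ⟨by nlinarith [sq_nonneg (2 * a - b)], by nlinarith [sq_nonneg (2 * a - b)]⟩
  -- `1 + ω = -ω²`, so each case reduces to `ω³ = 1`.
  interval_cases a <;> interval_cases b <;> push_cast <;> first
    | (exfalso; omega)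
    | linear_combination (ω ^ 4 - ω ^ 3 + ω - 1) * ω_sq_add_ω_add_one
    | linear_combination (ω ^ 4 + 5 * ω ^ 3 + 9 * ω ^ 2 + 6 * ω) * ω_sq_add_ω_add_one
    | norm_num

lemma pow_six_eq_one_of_mem_Zω_of_conj_mul_eq_one {z w : ℂ} (hz : z ∈ Zω) (hw : w ∈ Zω)
    (h : starRingEnd ℂ z * w = 1) : z ^ 6 = 1 := by
  obtain ⟨a, b, rfl⟩ := hz
  obtain ⟨c, d, rfl⟩ := hw
  have hnorm := congrArg Complex.normSq h
  rw [map_mul, Complex.normSq_conj, normSq_intCast_add_intCast_mul_ω,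
    normSq_intCast_add_intCast_mul_ω, map_one] at hnorm
  have hint : (a ^ 2 - a * b + b ^ 2) * (c ^ 2 - c * d + d ^ 2) = 1 := by exact_mod_cast hnorm
  have hpos : 0 ≤ a ^ 2 - a * b + b ^ 2 := by nlinarith [sq_nonneg (2 * a - b), sq_nonneg b]
  exact intCast_add_intCast_mul_ω_pow_six <|
    (Int.eq_one_or_neg_one_of_mul_eq_one hint).resolve_right (by omega)

lemma conjTranspose_mul_Jm_mul_apply (G : Matrix (Fin 4) (Fin 4) ℂ) (i j : Fin 4) :
    (Gᴴ * Jm * G) i j = starRingEnd ℂ (G 3 i) * G 0 j + starRingEnd ℂ (G 1 i) * G 1 j +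
      starRingEnd ℂ (G 2 i) * G 2 j + starRingEnd ℂ (G 0 i) * G 3 j := by
  simp [Matrix.mul_apply, Fin.sum_univ_four, Jm, Matrix.conjTranspose_apply]

lemma conj_apply_zero_zero_mul_apply_three_three_eq_one {G : Matrix (Fin 4) (Fin 4) ℂ}
    (hG : Gᴴ * Jm * G = Jm) (h30 : G 3 0 = 0) : starRingEnd ℂ (G 0 0) * G 3 3 = 1 := by
  have h00 := congrFun (congrFun hG 0) 0
  have h03 := congrFun (congrFun hG 0) 3
  rw [conjTranspose_mul_Jm_mul_apply, h30] at h00 h03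
  simp only [map_zero, zero_mul, zero_add, mul_zero, add_zero, Jm, of_apply, cons_val',
    cons_val_zero, cons_val_fin_one, cons_val] at h00 h03
  have hsum : Complex.normSq (G 1 0) + Complex.normSq (G 2 0) = 0 := by
    simpa [Complex.normSq_apply] using congrArg Complex.re h00
  obtain ⟨h10, h20⟩ := (add_eq_zero_iff_of_nonneg (Complex.normSq_nonneg _)
    (Complex.normSq_nonneg _)).mp hsum
  rw [Complex.normSq_eq_zero] at h10 h20
  simpa [h10, h20] using h03

/-- If G ∈ U(3,1) has Eisenstein integer entries and G₄₁ = 0, then G₁₁ is a sixth root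
of unity. -/
theorem stmt12 (G : Matrix (Fin 4) (Fin 4) ℂ) (hG : Gᴴ * Jm * G = Jm)
    (hent : ∀ i j, G i j ∈ Zω) (h41 : G 3 0 = 0) :
    (G 0 0) ^ 6 = 1 :=
  pow_six_eq_one_of_mem_Zω_of_conj_mul_eq_one (hent 0 0) (hent 3 3)
    (conj_apply_zero_zero_mul_apply_three_three_eq_one hG h41)
end
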